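/- Let G be an abelian group and let L = ⊕_{g∈G} L_g be a G-graded Lie algebra over a field of characteristic zero which is finitely generated as a Lie algebra. Then the space Δ(L) of all 1/2-derivations of L decomposes as the direct sum Δ(L) = ⊕_{g∈G} Δ_g(L), where Δ_g(L) is the space of 1/2-derivations φ of degree g, i.e. those with φ(L_h) ⊆ L_{g+h} for all h ∈ G. In particular, every 1/2-derivation of L is a finite sum of 1/2-derivations of homogeneous degree. -/
import Mathlib


noncomputable section

/-- A `1/2`-derivation of a Lie algebra over `K`: a linear map `φ` with
`φ([x,y]) = (1/2)([φ(x),y] + [x,φ(y)])`. -/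
def IsHalfDerivK (K : Type*) {L : Type*} [Field K] [LieRing L] [LieAlgebra K L]
    (φ : L →ₗ[K] L) : Prop :=
  ∀ x y : L, φ ⁅x, y⁆ = (2⁻¹ : K) • (⁅φ x, y⁆ + ⁅x, φ y⁆)

set_option linter.unusedSectionVars false
set_option maxHeartbeats 1000000
open DirectSum

section
variable {G : Type*} [AddCommGroup G] [DecidableEq G]
  {K : Type*} [Field K] [CharZero K]
  {L : Type*} [LieRing L] [LieAlgebra K L]
  (ℒ : G → Submodule K L) [DirectSum.Decomposition ℒ]

def projHD (g : G) : L →ₗ[K] L :=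
  (ℒ g).subtype ∘ₗ (DirectSum.component K G (fun i => ℒ i) g) ∘ₗ
    (DirectSum.decomposeLinearEquiv ℒ).toLinearMap

lemma projHD_mem (g : G) (x : L) : projHD ℒ g x ∈ ℒ g := (DirectSum.decompose ℒ x g).2

lemma projHD_of_mem_same {g : G} {x : L} (hx : x ∈ ℒ g) : projHD ℒ g x = x :=
  DirectSum.decompose_of_mem_same ℒ hx

lemma projHD_of_mem_ne {g h : G} {x : L} (hx : x ∈ ℒ g) (hne : g ≠ h) : projHD ℒ h x = 0 :=
  DirectSum.decompose_of_mem_ne ℒ hx hne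

lemma sum_projHD (x : L) [∀ (i : G) (y : ℒ i), Decidable (y ≠ 0)] :
    ∑ i ∈ (DirectSum.decompose ℒ x).support, projHD ℒ i x = x :=
  DirectSum.sum_support_decompose ℒ x

lemma projHD_notMem_support {x : L} {g : G} [∀ (i : G) (y : ℒ i), Decidable (y ≠ 0)]
    (hg : g ∉ (DirectSum.decompose ℒ x).support) : projHD ℒ g x = 0 := by
  have := DFinsupp.notMem_support_iff.mp hg
  show ((DirectSum.decompose ℒ x g : ℒ g) : L) = 0
  rw [this]; rfl

lemma ext_homogHD {f₁ f₂ : L →ₗ[K] L}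
    (h : ∀ g : G, ∀ x ∈ ℒ g, f₁ x = f₂ x) : f₁ = f₂ := by
  classical
  ext x
  rw [← sum_projHD ℒ x, map_sum, map_sum]
  exact Finset.sum_congr rfl fun i _ => h i _ (projHD_mem ℒ i x)

def compHD (φ : L →ₗ[K] L) (g : G) : L →ₗ[K] L :=
  (DirectSum.toModule K G L (fun h => projHD ℒ (g + h) ∘ₗ φ ∘ₗ (ℒ h).subtype)) ∘ₗ
    (DirectSum.decomposeLinearEquiv ℒ).toLinearMap

lemma compHD_of_mem (φ : L →ₗ[K] L) (g : G) {h : G} {x : L} (hx : x ∈ ℒ h) :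
    compHD ℒ φ g x = projHD ℒ (g + h) (φ x) := by
  unfold compHD
  simp only [LinearMap.comp_apply, LinearEquiv.coe_coe, decomposeLinearEquiv_apply]
  rw [DirectSum.decompose_of_mem ℒ hx, ← DirectSum.lof_eq_of K, DirectSum.toModule_lof]
  rfl

lemma compHD_mem (φ : L →ₗ[K] L) (g : G) {h : G} {x : L} (hx : x ∈ ℒ h) :
    compHD ℒ φ g x ∈ ℒ (g + h) := by
  rw [compHD_of_mem ℒ φ g hx]; exact projHD_mem ℒ _ _


lemma sum_lie' {ι : Type*} (s : Finset ι) (f : ι → L) (y : L) :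
    ⁅∑ i ∈ s, f i, y⁆ = ∑ i ∈ s, ⁅f i, y⁆ :=
  map_sum (AddMonoidHom.mk' (fun x : L => ⁅x, y⁆) (fun a b => add_lie a b y)) f s

lemma lie_sum' {ι : Type*} (s : Finset ι) (f : ι → L) (x : L) :
    ⁅x, ∑ i ∈ s, f i⁆ = ∑ i ∈ s, ⁅x, f i⁆ :=
  map_sum (AddMonoidHom.mk' (fun y : L => ⁅x, y⁆) (fun a b => lie_add x a b)) f s

variable (hgraded : ∀ g h : G, ∀ x ∈ ℒ g, ∀ y ∈ ℒ h, ⁅x, y⁆ ∈ ℒ (g + h))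

include hgraded

lemma projHD_lie_left {b : G} {y : L} (hy : y ∈ ℒ b) (z : L) (d : G) :
    projHD ℒ (d + b) ⁅z, y⁆ = ⁅projHD ℒ d z, y⁆ := by
  classical
  conv_lhs => rw [← sum_projHD ℒ z]
  rw [sum_lie', map_sum]
  have key : ∀ c ∈ (DirectSum.decompose ℒ z).support,
      projHD ℒ (d + b) ⁅projHD ℒ c z, y⁆ = if c = d then ⁅projHD ℒ d z, y⁆ else 0 := by
    intro c _
    have hmem : ⁅projHD ℒ c z, y⁆ ∈ ℒ (c + b) := hgraded c b _ (projHD_mem ℒ c z) y hy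
    by_cases hcd : c = d
    · subst hcd; rw [if_pos rfl]; exact projHD_of_mem_same ℒ hmem
    · rw [if_neg hcd]
      exact projHD_of_mem_ne ℒ hmem (fun hEq => hcd (by
        have := add_right_cancel hEq; exact this))
  rw [Finset.sum_congr rfl key, Finset.sum_ite_eq' _ d]
  split_ifs with hd
  · rfl
  · rw [projHD_notMem_support ℒ hd, zero_lie]

lemma projHD_lie_right {a : G} {x : L} (hx : x ∈ ℒ a) (z : L) (d : G) :
    projHD ℒ (a + d) ⁅x, z⁆ = ⁅x, projHD ℒ d z⁆ := by
  classical
  conv_lhs => rw [← sum_projHD ℒ z]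
  rw [lie_sum', map_sum]
  have key : ∀ c ∈ (DirectSum.decompose ℒ z).support,
      projHD ℒ (a + d) ⁅x, projHD ℒ c z⁆ = if c = d then ⁅x, projHD ℒ d z⁆ else 0 := by
    intro c _
    have hmem : ⁅x, projHD ℒ c z⁆ ∈ ℒ (a + c) := hgraded a c x hx _ (projHD_mem ℒ c z)
    by_cases hcd : c = d
    · subst hcd; rw [if_pos rfl]; exact projHD_of_mem_same ℒ hmem
    · rw [if_neg hcd]
      exact projHD_of_mem_ne ℒ hmem (fun hEq => hcd (add_left_cancel hEq))
  rw [Finset.sum_congr rfl key, Finset.sum_ite_eq' _ d]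
  split_ifs with hd
  · rfl
  · rw [projHD_notMem_support ℒ hd, lie_zero]

lemma compHD_halfDeriv_homog (φ : L →ₗ[K] L) (hφ : IsHalfDerivK K φ) (g : G)
    {a b : G} {x y : L} (hx : x ∈ ℒ a) (hy : y ∈ ℒ b) :
    compHD ℒ φ g ⁅x, y⁆ =
      (2⁻¹ : K) • (⁅compHD ℒ φ g x, y⁆ + ⁅x, compHD ℒ φ g y⁆) := by
  have hxy : ⁅x, y⁆ ∈ ℒ (a + b) := hgraded a b x hx y hy
  rw [compHD_of_mem ℒ φ g hxy, hφ x y, map_smul, map_add]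
  have h1 : projHD ℒ (g + (a + b)) ⁅φ x, y⁆ = ⁅projHD ℒ (g + a) (φ x), y⁆ := by
    rw [show g + (a + b) = (g + a) + b by abel]
    exact projHD_lie_left ℒ hgraded hy (φ x) (g + a)
  have h2 : projHD ℒ (g + (a + b)) ⁅x, φ y⁆ = ⁅x, projHD ℒ (g + b) (φ y)⁆ := by
    rw [show g + (a + b) = a + (g + b) by abel]
    exact projHD_lie_right ℒ hgraded hx (φ y) (g + b)
  rw [h1, h2, compHD_of_mem ℒ φ g hx, compHD_of_mem ℒ φ g hy]

lemma compHD_halfDeriv (φ : L →ₗ[K] L) (hφ : IsHalfDerivK K φ) (g : G) :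
    IsHalfDerivK K (compHD ℒ φ g) := by
  classical
  intro x y
  set ψ := compHD ℒ φ g with hψ
  conv_lhs => rw [← sum_projHD ℒ x, ← sum_projHD ℒ y]
  conv_rhs => rw [← sum_projHD ℒ x, ← sum_projHD ℒ y]
  simp only [sum_lie', lie_sum', map_sum]
  rw [← Finset.sum_add_distrib, Finset.smul_sum]
  refine Finset.sum_congr rfl fun a _ => ?_
  rw [← Finset.sum_add_distrib, Finset.smul_sum]
  refine Finset.sum_congr rfl fun b _ => ?_
  exact compHD_halfDeriv_homog ℒ hgraded φ hφ g (projHD_mem ℒ b x) (projHD_mem ℒ a y)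

lemma halfDeriv_eq_zero_of_vanish (ψ : L →ₗ[K] L) (hψ : IsHalfDerivK K ψ) (s : Set L)
    (hs : LieSubalgebra.lieSpan K L s = ⊤) (h0 : ∀ x ∈ s, ψ x = 0) : ψ = 0 := by
  let A : LieSubalgebra K L :=
    { LinearMap.ker ψ with
      lie_mem' := by
        intro x y hx hy
        have hx' : ψ x = 0 := hx
        have hy' : ψ y = 0 := hy
        show ψ ⁅x, y⁆ = 0
        rw [hψ x y, hx', hy', zero_lie, lie_zero, add_zero, smul_zero] }
  have hle : LieSubalgebra.lieSpan K L s ≤ A :=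
    LieSubalgebra.lieSpan_le.mpr (fun x hx => h0 x hx)
  rw [hs] at hle
  ext x
  exact hle (LieSubalgebra.mem_top x)

end

/-- Let `L = ⊕_{g ∈ G} L_g` be a `G`-graded Lie algebra over a
field of characteristic zero which is finitely generated as a Lie algebra.
Then `Δ(L) = ⊕_{g ∈ G} Δ_g(L)`: every `1/2`-derivation of `L` is a finite sum
of `1/2`-derivations of homogeneous degree, and `1/2`-derivations of pairwise
distinct homogeneous degrees are linearly independent (a finite sum of such
maps vanishes only if each summand vanishes). -/
theorem half_derivations_graded_decomposition
    (G : Type*) [AddCommGroup G] [DecidableEq G]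
    (K : Type*) [Field K] [CharZero K]
    (L : Type*) [LieRing L] [LieAlgebra K L]
    (ℒ : G → Submodule K L) [DirectSum.Decomposition ℒ]
    (hgraded : ∀ g h : G, ∀ x ∈ ℒ g, ∀ y ∈ ℒ h, ⁅x, y⁆ ∈ ℒ (g + h))
    (hfg : ∃ s : Finset L, LieSubalgebra.lieSpan K L ↑s = ⊤) :
    (∀ φ : L →ₗ[K] L, IsHalfDerivK K φ →
      ∃ (T : Finset G) (ψ : G → (L →ₗ[K] L)),
        (∀ g ∈ T, IsHalfDerivK K (ψ g)) ∧
        (∀ g ∈ T, ∀ h : G, ∀ x ∈ ℒ h, ψ g x ∈ ℒ (g + h)) ∧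
        φ = ∑ g ∈ T, ψ g) ∧
    (∀ (T : Finset G) (ψ : G → (L →ₗ[K] L)),
        (∀ g ∈ T, IsHalfDerivK K (ψ g)) →
        (∀ g ∈ T, ∀ h : G, ∀ x ∈ ℒ h, ψ g x ∈ ℒ (g + h)) →
        ∑ g ∈ T, ψ g = 0 → ∀ g ∈ T, ψ g = 0) := by
  classical
  constructor
  · -- existence of the decomposition
    intro φ hφ
    obtain ⟨s, hs⟩ := hfg
    set T : Finset G := s.biUnion fun x =>
      (DirectSum.decompose ℒ x).support.biUnion fun h =>
        ((DirectSum.decompose ℒ (φ (projHD ℒ h x))).support).image (fun c => c - h) with hT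
    -- components vanish outside T
    have hvanish : ∀ g ∉ T, compHD ℒ φ g = 0 := by
      intro g hg
      apply halfDeriv_eq_zero_of_vanish ℒ hgraded _ (compHD_halfDeriv ℒ hgraded φ hφ g) _ hs
      intro x hxs
      have hx : x ∈ s := by exact_mod_cast hxs
      conv_lhs => rw [← sum_projHD ℒ x, map_sum]
      refine Finset.sum_eq_zero fun h hh => ?_
      rw [compHD_of_mem ℒ φ g (projHD_mem ℒ h x)]
      apply projHD_notMem_support
      intro hsupp
      apply hg
      rw [hT]
      refine Finset.mem_biUnion.mpr ⟨x, hx, Finset.mem_biUnion.mpr ⟨h, hh, ?_⟩⟩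
      exact Finset.mem_image.mpr ⟨g + h, hsupp, by abel⟩
    refine ⟨T, fun g => compHD ℒ φ g, fun g _ => compHD_halfDeriv ℒ hgraded φ hφ g,
      fun g _ h x hx => compHD_mem ℒ φ g hx, ?_⟩
    -- φ equals the sum of its components
    apply ext_homogHD ℒ
    intro h x hx
    rw [LinearMap.sum_apply]
    simp only [compHD_of_mem ℒ φ _ hx]
    set S : Finset G := (DirectSum.decompose ℒ (φ x)).support with hS
    set F : Finset G := S.image (fun c => c - h) with hF
    have step1 : ∑ g ∈ T, projHD ℒ (g + h) (φ x) = ∑ g ∈ T ∪ F, projHD ℒ (g + h) (φ x) := by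
      refine Finset.sum_subset Finset.subset_union_left fun g _ hgT => ?_
      have := hvanish g hgT
      have h2 := compHD_of_mem ℒ φ g hx
      rw [this] at h2
      simpa using h2.symm
    rw [step1]
    rw [← Finset.sum_image (f := fun c => projHD ℒ c (φ x))
      (g := fun g => g + h) (fun a _ b _ hab => by exact add_right_cancel hab)]
    have hsub : S ⊆ (T ∪ F).image (fun g => g + h) := by
      intro c hc
      refine Finset.mem_image.mpr ⟨c - h, Finset.mem_union_right _ ?_, by abel⟩
      exact Finset.mem_image.mpr ⟨c, hc, rfl⟩
    rw [← Finset.sum_subset hsub (fun c _ hcS => projHD_notMem_support ℒ hcS)]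
    rw [hS]
    exact (sum_projHD ℒ (φ x)).symm
  · -- independence
    intro T ψ _ hdeg hsum g hg
    apply ext_homogHD ℒ (f₂ := 0)
    intro h x hx
    have h0 : ∑ g' ∈ T, ψ g' x = 0 := by
      have := LinearMap.congr_fun hsum x
      rwa [LinearMap.sum_apply, LinearMap.zero_apply] at this
    have := congrArg (projHD ℒ (g + h)) h0
    rw [map_sum, map_zero] at this
    rw [Finset.sum_eq_single_of_mem g hg (fun g' hg' hne =>
      projHD_of_mem_ne ℒ (hdeg g' hg' h x hx) (fun hEq => hne (add_right_cancel hEq)))] at this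
    rw [projHD_of_mem_same ℒ (hdeg g hg h x hx)] at this
    simpa using this
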